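/- arXiv:1103.5539 — 5 statements merged into one kernel-verified Lean document; each statement's English description precedes it below -/
import Mathlib

section
/- Let k be a field, R' a finitely generated k-algebra with maximal ideal m' satisfying R'/m' ≅ k, and let E' be an injective envelope of k = R'/m' over R'. Let I ⊆ m' be an ideal and set R = R'/I. Then the submodule E = { e ∈ E' : I·e = 0 } of all elements of E' annihilated by I, regarded as an R-module, is an injective envelope of k = R/(m'/I) over the ring R. -/
/-- `E` is an injective envelope of `N` over `T`, witnessed by the `T`-linear map
`f : N → E`: the module `E` is injective, `f` is injective, and the image of `f` is
an essential submodule of `E` (every nonzero submodule meets it nontrivially). -/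
def IsInjectiveEnvelope (T : Type) [CommRing T] {N E : Type} [AddCommGroup N] [Module T N]
    [AddCommGroup E] [Module T E] (f : N →ₗ[T] E) : Prop :=
  Module.Injective T E ∧ Function.Injective f ∧
    ∀ P : Submodule T E, P ≠ ⊥ → LinearMap.range f ⊓ P ≠ ⊥

/-!
The `I`-torsion of an injective `R'`-module is an injective `R'/I`-module by Baer's criterion:
a map from an ideal `J` of `R'/I` lifts to a map from its preimage in `R'`, which extends to `R'`
because `E'` is injective, and the extension kills `I ⊆ preimage J`, so its value at `1` is
`I`-torsion. Essentiality passes to the torsion submodule because an essential submodule stays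
essential in every submodule of `E'`, and testing against fewer submodules (those stable under
`R'/I` rather than under `R'`) only makes essentiality easier. Finally `h` and `f` agree on the
images of `1`, so `h` has the same image as `f` and is injective because `f` is.
-/

universe u v

namespace Submodule

variable {R M : Type*} [Ring R] [AddCommGroup M] [Module R M]

def IsEssential (N : Submodule R M) : Prop :=
  ∀ P : Submodule R M, P ≠ ⊥ → N ⊓ P ≠ ⊥

theorem IsEssential.mono {N N' : Submodule R M} (hN : N.IsEssential) (hle : N ≤ N') :
    N'.IsEssential := fun P hP => ne_bot_of_le_ne_bot (hN P hP) (inf_le_inf_right P hle)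

theorem IsEssential.comap_subtype {N : Submodule R M} (hN : N.IsEssential) (T : Submodule R M) :
    (N.comap T.subtype).IsEssential := by
  intro P hP
  have hPT : P.map T.subtype ≠ ⊥ :=
    ((map_injective_of_injective T.injective_subtype).ne_iff' (map_bot _)).mpr hP
  obtain ⟨x, hx, hx0⟩ := exists_mem_ne_zero_of_ne_bot (hN _ hPT)
  obtain ⟨hxN, ⟨p, hpP, rfl⟩⟩ := mem_inf.mp hx
  exact (Submodule.ne_bot_iff _).mpr ⟨p, mem_inf.mpr ⟨hxN, hpP⟩, fun h => hx0 (by simp [h])⟩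

theorem IsEssential.of_restrictScalars {S : Type*} [Ring S] [Module S M] [SMul R S]
    [IsScalarTower R S M] {N : Submodule S M} (hN : (N.restrictScalars R).IsEssential) :
    N.IsEssential := by
  intro P hP
  rw [Ne, ← restrictScalars_eq_bot_iff R, restrictScalars_inf]
  exact hN _ (by rwa [Ne, restrictScalars_eq_bot_iff])

end Submodule

section TorsionBySet

open Submodule

variable {R : Type u} {M : Type v} [CommRing R] [AddCommGroup M] [Module R M] (I : Ideal R)

theorem Module.Baer.torsionBySet (hM : Module.Baer R M) :
    Module.Baer (R ⧸ I) (Submodule.torsionBySet R M I) := by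
  intro J g
  let J' := J.comap (Ideal.Quotient.mk I)
  let φ : J' →ₗ[R] M := (Submodule.torsionBySet R M I).subtype ∘ₗ g.restrictScalars R ∘ₗ
    (Ideal.Quotient.mkₐ R I).toLinearMap.restrict (p := J') (q := J.restrictScalars R)
      fun _ hx => hx
  have hφ (x : R) (hx : x ∈ J') : φ ⟨x, hx⟩ = g ⟨Ideal.Quotient.mk I x, hx⟩ := rfl
  obtain ⟨g', hg'⟩ := hM J' φ
  have hg'1 : g' 1 ∈ Submodule.torsionBySet R M I := by
    rw [mem_torsionBySet_iff]
    rintro ⟨i, hi⟩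
    have hi0 : Ideal.Quotient.mk I i = 0 := Ideal.Quotient.eq_zero_iff_mem.mpr hi
    have hiJ' : i ∈ J' := by simp [J', hi0]
    have hφi : (⟨Ideal.Quotient.mk I i, hiJ'⟩ : J) = 0 := Subtype.ext hi0
    simp [← map_smul, hg' i hiJ', hφ, hφi]
  refine ⟨LinearMap.toSpanSingleton (R ⧸ I) _ ⟨g' 1, hg'1⟩, fun x hx => ?_⟩
  obtain ⟨c, rfl⟩ := Ideal.Quotient.mk_surjective x
  ext
  simp [← hφ c hx, ← hg' c hx, ← map_smul]

theorem Module.Injective.torsionBySet [Small.{v} R] [Module.Injective R M] :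
    Module.Injective (R ⧸ I) (Submodule.torsionBySet R M I) :=
  ((Module.Baer.of_injective ‹_›).torsionBySet I).injective

variable {I} {m : Ideal R} {f : (R ⧸ m) →ₗ[R] M}
  {h : ((R ⧸ I) ⧸ m.map (Ideal.Quotient.mk I)) →ₗ[R ⧸ I] torsionBySet R M I}

theorem coe_apply_mk_mk_of_apply_one
    (hh : (h (Submodule.Quotient.mk 1) : M) = f (Ideal.Quotient.mk m 1)) (c : R) :
    (h (Submodule.Quotient.mk (Ideal.Quotient.mk I c)) : M) = f (Ideal.Quotient.mk m c) := by
  have hc : (Submodule.Quotient.mk (Ideal.Quotient.mk I c) :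
      (R ⧸ I) ⧸ m.map (Ideal.Quotient.mk I)) =
        Ideal.Quotient.mk I c • Submodule.Quotient.mk 1 := by
    rw [← Submodule.Quotient.mk_smul, smul_eq_mul, mul_one]
  rw [hc, map_smul, torsionBySet.mk_smul, coe_smul, hh, ← map_smul, Algebra.smul_def, map_one,
    mul_one]
  rfl

theorem injective_of_apply_one
    (hh : (h (Submodule.Quotient.mk 1) : M) = f (Ideal.Quotient.mk m 1))
    (hf : Function.Injective f) : Function.Injective h := by
  rw [← LinearMap.ker_eq_bot, eq_bot_iff]
  intro x hx
  obtain ⟨y, rfl⟩ := Submodule.Quotient.mk_surjective _ x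
  obtain ⟨c, rfl⟩ := Ideal.Quotient.mk_surjective y
  have hfc : f (Ideal.Quotient.mk m c) = 0 := by
    rw [← coe_apply_mk_mk_of_apply_one hh, LinearMap.mem_ker.mp hx, ZeroMemClass.coe_zero]
  have hcm : c ∈ m := Ideal.Quotient.eq_zero_iff_mem.mp (hf (hfc.trans f.map_zero.symm))
  rw [mem_bot, Submodule.Quotient.mk_eq_zero]
  exact Ideal.mem_map_of_mem _ hcm

theorem comap_range_le_range_of_apply_one
    (hh : (h (Submodule.Quotient.mk 1) : M) = f (Ideal.Quotient.mk m 1)) :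
    (LinearMap.range f).comap (torsionBySet R M I).subtype ≤
      (LinearMap.range h).restrictScalars R := by
  rintro x ⟨y, hy⟩
  obtain ⟨c, rfl⟩ := Ideal.Quotient.mk_surjective y
  exact ⟨_, Subtype.ext ((coe_apply_mk_mk_of_apply_one hh c).trans hy)⟩

end TorsionBySet

theorem torsion_submodule_of_injective_envelope_is_injective_envelope_general
    (R' : Type) [CommRing R']
    (m' : Ideal R')
    (E' : Type) [AddCommGroup E'] [Module R' E']
    (f : (R' ⧸ m') →ₗ[R'] E') (hf : IsInjectiveEnvelope R' f)
    (I : Ideal R') :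
    -- `E = {e ∈ E' : I e = 0}` is a module over `R = R'/I`:
    letI : Module (R' ⧸ I) (Submodule.torsionBySet R' E' I) :=
      (Submodule.torsionBySet_isTorsionBySet (I : Set R')).module
    -- any `R`-linear map from `k = R/(𝔪'/I)` to `E` sending `1` to `f(1)` is an
    -- injective envelope of `k` over `R`:
    ∀ (h : ((R' ⧸ I) ⧸ Ideal.map (Ideal.Quotient.mk I) m') →ₗ[R' ⧸ I]
        (Submodule.torsionBySet R' E' I)),
      (h (Submodule.Quotient.mk 1) : E') = f (Ideal.Quotient.mk m' 1) →
      IsInjectiveEnvelope (R' ⧸ I) h := by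
  intro h hh
  obtain ⟨hE', hf_inj, hf_ess : (LinearMap.range f).IsEssential⟩ := hf
  refine ⟨Module.Injective.torsionBySet I, injective_of_apply_one hh hf_inj, ?_⟩
  exact Submodule.IsEssential.of_restrictScalars (R := R')
    ((hf_ess.comap_subtype _).mono (comap_range_le_range_of_apply_one hh))

/-- Let `k` be a field, `R'` a finitely generated `k`-algebra with a
maximal ideal `𝔪'` such that `R'/𝔪' ≅ k`, and `E'` an injective envelope of
`k = R'/𝔪'` over `R'`. Let `I ⊆ 𝔪'` be an ideal and `R = R'/I`. Then the
`I`-torsion submodule `E = {e ∈ E' : I·e = 0}`, regarded as an `R`-module, is an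
injective envelope of `k = R/(𝔪'/I)` over `R`. -/
theorem torsion_submodule_of_injective_envelope_is_injective_envelope
    (k R' : Type) [Field k] [CommRing R'] [Algebra k R'] [Algebra.FiniteType k R']
    (m' : Ideal R') [m'.IsMaximal] (hres : Function.Bijective (algebraMap k (R' ⧸ m')))
    (E' : Type) [AddCommGroup E'] [Module R' E']
    (f : (R' ⧸ m') →ₗ[R'] E') (hf : IsInjectiveEnvelope R' f)
    (I : Ideal R') (hI : I ≤ m') :
    -- `E = {e ∈ E' : I e = 0}` is a module over `R = R'/I`:
    letI : Module (R' ⧸ I) (Submodule.torsionBySet R' E' I) :=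
      (Submodule.torsionBySet_isTorsionBySet (I : Set R')).module
    -- any `R`-linear map from `k = R/(𝔪'/I)` to `E` sending `1` to `f(1)` is an
    -- injective envelope of `k` over `R`:
    ∀ (h : ((R' ⧸ I) ⧸ Ideal.map (Ideal.Quotient.mk I) m') →ₗ[R' ⧸ I]
        (Submodule.torsionBySet R' E' I)),
      (h (Submodule.Quotient.mk 1) : E') = f (Ideal.Quotient.mk m' 1) →
      IsInjectiveEnvelope (R' ⧸ I) h :=
  torsion_submodule_of_injective_envelope_is_injective_envelope_general R' m' E' f hf I
end

section
/- Let k be a field, R' and S' k-algebras, I ⊆ R' and J ⊆ S' ideals, and E' an R'-module and F' an S'-module. Inside the R' ⊗_k S'-module E' ⊗_k F', the submodule of elements annihilated by the ideal I ⊗_k S' + R' ⊗_k J is exactly E ⊗_k F, where E = { e ∈ E' : I·e = 0 } and F = { f ∈ F' : J·f = 0 }. -/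
/-!
Over a field every module is free, so expanding an element of `M ⊗ N` in a basis of `N` shows
that `(⨅ᵢ ker fᵢ) ⊗ N` is the joint kernel of the maps `fᵢ ⊗ 1`, even for infinitely many `fᵢ`;
symmetrically on the left. Elements annihilated by `I ⊗ S' + R' ⊗ J` are those killed by every
`a ⊗ 1` with `a ∈ I` and every `1 ⊗ b` with `b ∈ J`, i.e. the intersection `(E ⊗ F') ∩ (E' ⊗ F)`,
and this is `E ⊗ F` by right exactness of `E ⊗ -` and flatness of `F' ⧸ F`.
-/

open TensorProduct

section TensorModule

variable (k A B M N : Type) [Field k] [CommRing A] [CommRing B] [Algebra k A] [Algebra k B]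
    [AddCommGroup M] [Module k M] [Module A M] [IsScalarTower k A M]
    [AddCommGroup N] [Module k N] [Module B N] [IsScalarTower k B N]

/-- `f ↦ 1_M ⊗ f` as a ring homomorphism on endomorphisms. -/
noncomputable def lTensorEndHom : Module.End k N →+* Module.End k (M ⊗[k] N) where
  toFun f := LinearMap.lTensor M f
  map_one' := LinearMap.lTensor_id M N
  map_mul' f g := LinearMap.lTensor_comp M f g
  map_zero' := LinearMap.lTensor_zero M
  map_add' := LinearMap.lTensor_add M

/-- The action of `B` on `M ⊗[k] N` through the second tensor factor. -/
noncomputable def rightAlgHom : B →ₐ[k] Module.End k (M ⊗[k] N) :=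
  AlgHom.mk' ((lTensorEndHom k M N).comp (Module.toModuleEnd k N : B →+* Module.End k N))
    (fun c b => by
      have h1 : (Module.toModuleEnd k N : B →+* Module.End k N) (c • b)
          = c • (Module.toModuleEnd k N : B →+* Module.End k N) b := by
        apply LinearMap.ext
        intro n
        show (c • b) • n = c • (b • n)
        rw [smul_assoc]
      show (lTensorEndHom k M N) _ = c • (lTensorEndHom k M N) _
      rw [h1]
      show LinearMap.lTensor M _ = c • LinearMap.lTensor M _
      rw [LinearMap.lTensor_smul])

/-- The action of `A` on `M ⊗[k] N` through the first tensor factor. -/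
noncomputable def leftAlgHom : A →ₐ[k] Module.End k (M ⊗[k] N) :=
  Algebra.lsmul k k (M ⊗[k] N)

lemma leftRightCommute (a : A) (b : B) :
    Commute (leftAlgHom k A M N a) (rightAlgHom k B M N b) := by
  apply LinearMap.ext
  intro z
  show a • (LinearMap.lTensor M ((Module.toModuleEnd k N : B →+* Module.End k N) b)) z
      = (LinearMap.lTensor M ((Module.toModuleEnd k N : B →+* Module.End k N) b)) (a • z)
  induction z using TensorProduct.induction_on with
  | zero => simp
  | tmul m n => rw [smul_tmul']; rfl
  | add x y hx hy => rw [smul_add, map_add, map_add, smul_add, hx, hy]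

/-- The canonical `A ⊗ₖ B`-module structure on `M ⊗ₖ N`, for `M` an `A`-module and
`N` a `B`-module; it satisfies `(a ⊗ b) • (m ⊗ n) = (a • m) ⊗ (b • n)`. -/
noncomputable def tensorTensorModule : Module (A ⊗[k] B) (M ⊗[k] N) :=
  Module.compHom _ (Algebra.TensorProduct.lift (leftAlgHom k A M N) (rightAlgHom k B M N)
    (leftRightCommute k A B M N)).toRingHom

lemma tensorTensorModule_smul_tmul (a : A) (b : B) (m : M) (n : N) :
    letI := tensorTensorModule k A B M N
    (a ⊗ₜ[k] b) • (m ⊗ₜ[k] n) = (a • m) ⊗ₜ[k] (b • n) := by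
  letI := tensorTensorModule k A B M N
  show (Algebra.TensorProduct.lift (leftAlgHom k A M N) (rightAlgHom k B M N)
    (leftRightCommute k A B M N) (a ⊗ₜ[k] b)) (m ⊗ₜ[k] n) = (a • m) ⊗ₜ[k] (b • n)
  rw [Algebra.TensorProduct.lift_tmul]
  show a • (LinearMap.lTensor M ((Module.toModuleEnd k N : B →+* Module.End k N) b)) (m ⊗ₜ[k] n)
      = (a • m) ⊗ₜ[k] (b • n)
  rw [LinearMap.lTensor_tmul, smul_tmul']
  rfl

end TensorModule

open LinearMap Submodule

section TensorKernels

variable {R M N : Type*} [CommRing R] [AddCommGroup M] [Module R M] [AddCommGroup N] [Module R N]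

lemma TensorProduct.equivFinsuppOfBasisRight_rTensor_apply {κ P : Type*} [DecidableEq κ]
    [AddCommGroup P] [Module R P] (𝒞 : Module.Basis κ R N) (f : M →ₗ[R] P) (x : M ⊗[R] N)
    (i : κ) :
    equivFinsuppOfBasisRight 𝒞 (f.rTensor N x) i = f (equivFinsuppOfBasisRight 𝒞 x i) := by
  induction x <;> simp_all

theorem LinearMap.range_rTensor_subtype_iInf_ker [Module.Free R N] {ι : Type*} {P : ι → Type*}
    [∀ i, AddCommGroup (P i)] [∀ i, Module R (P i)] (f : ∀ i, M →ₗ[R] P i) :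
    range ((⨅ i, ker (f i)).subtype.rTensor N) = ⨅ i, ker ((f i).rTensor N) := by
  classical
  refine le_antisymm ?_ fun x hx => ?_
  · rintro _ ⟨w, rfl⟩
    simp only [mem_iInf, mem_ker, ← comp_apply, ← rTensor_comp]
    intro i
    rw [show f i ∘ₗ (⨅ i, ker (f i)).subtype = 0 from
      LinearMap.ext fun y => mem_ker.mp (mem_iInf _ |>.mp y.2 i), rTensor_zero, zero_apply]
  · let 𝒞 := Module.Free.chooseBasis R N
    have hcoeff : ∀ j, equivFinsuppOfBasisRight 𝒞 x j ∈ ⨅ i, ker (f i) := by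
      simp only [mem_iInf, mem_ker] at hx ⊢
      intro j i
      rw [← equivFinsuppOfBasisRight_rTensor_apply, hx i, map_zero, Finsupp.zero_apply]
    rw [← (equivFinsuppOfBasisRight 𝒞).symm_apply_apply x, equivFinsuppOfBasisRight_symm_apply]
    exact Submodule.finsuppSum_mem _ _ _ _ fun j _ => ⟨⟨_, hcoeff j⟩ ⊗ₜ 𝒞 j, rfl⟩

theorem LinearMap.range_lTensor_subtype_iInf_ker [Module.Free R M] {ι : Type*} {P : ι → Type*}
    [∀ i, AddCommGroup (P i)] [∀ i, Module R (P i)] (g : ∀ i, N →ₗ[R] P i) :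
    range ((⨅ i, ker (g i)).subtype.lTensor M) = ⨅ i, ker ((g i).lTensor M) := by
  ext x
  have h := SetLike.ext_iff.mp (range_rTensor_subtype_iInf_ker (N := M) g)
    (TensorProduct.comm R M N x)
  simp only [mem_iInf, mem_ker, mem_range, rTensor_comm, LinearEquiv.map_eq_zero_iff] at h ⊢
  rw [← h, (TensorProduct.comm R ↥(⨅ i, ker (g i)) M).surjective.exists]
  refine exists_congr fun y => ?_
  rw [lTensor_comm, ← TensorProduct.comm_symm, LinearEquiv.symm_apply_eq]

theorem LinearMap.range_map_subtype_eq_range_rTensor_inf_range_lTensor (p : Submodule R M)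
    (q : Submodule R N) [Module.Flat R (N ⧸ q)] :
    range (TensorProduct.map p.subtype q.subtype) =
      range (p.subtype.rTensor N) ⊓ range (q.subtype.lTensor M) := by
  refine le_antisymm (le_inf ?_ ?_) ?_
  · rw [← rTensor_comp_lTensor]
    exact range_comp_le_range _ _
  · rw [← lTensor_comp_rTensor]
    exact range_comp_le_range _ _
  · rintro x ⟨⟨w, rfl⟩, hx⟩
    have hw : q.mkQ.lTensor p w = 0 := by
      apply Module.Flat.rTensor_preserves_injective_linearMap p.subtype p.injective_subtype
      rw [map_zero, ← comp_apply, rTensor_comp_lTensor, ← lTensor_comp_rTensor, comp_apply]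
      exact (lTensor_exact M (exact_subtype_mkQ q) q.mkQ_surjective _).mpr hx
    obtain ⟨u, rfl⟩ := (lTensor_exact p (exact_subtype_mkQ q) q.mkQ_surjective w).mp hw
    exact ⟨u, by rw [← rTensor_comp_lTensor, comp_apply]⟩

end TensorKernels

lemma forall_mem_map_sup_map_smul_eq_zero_iff {A B T X F G : Type*} [Semiring A] [Semiring B]
    [Semiring T] [AddCommMonoid X] [Module T X] [FunLike F A T] [RingHomClass F A T]
    [FunLike G B T] [RingHomClass G B T] (φ : F) (ψ : G) (I : Ideal A) (J : Ideal B) (x : X) :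
    (∀ r ∈ I.map φ ⊔ J.map ψ, r • x = 0) ↔ (∀ a ∈ I, φ a • x = 0) ∧ ∀ b ∈ J, ψ b • x = 0 := by
  simp only [← Ideal.mem_torsionOf_iff, ← SetLike.le_def, sup_le_iff, Ideal.map_le_iff_le_comap]
  rfl

lemma Submodule.restrictScalars_eq_iInf_ker_toModuleEnd (k : Type*) {A M : Type*} [CommRing k]
    [CommRing A] [Algebra k A] [AddCommGroup M] [Module k M] [Module A M] [IsScalarTower k A M]
    (p : Submodule A M) (I : Ideal A) (hp : (p : Set M) = {m | ∀ a ∈ I, a • m = 0}) :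
    p.restrictScalars k = ⨅ a : I, ker (Module.toModuleEnd k M (a : A)) := by
  ext m
  rw [restrictScalars_mem, ← SetLike.mem_coe, hp]
  simp

section TensorTensorModule

variable (k A B M N : Type) [Field k] [CommRing A] [CommRing B] [Algebra k A] [Algebra k B]
    [AddCommGroup M] [Module k M] [Module A M] [IsScalarTower k A M]
    [AddCommGroup N] [Module k N] [Module B N] [IsScalarTower k B N]

lemma tensorTensorModule_tmul_one_smul (a : A) (z : M ⊗[k] N) :
    letI := tensorTensorModule k A B M N
    (a ⊗ₜ[k] (1 : B)) • z = (Module.toModuleEnd k M a).rTensor N z := by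
  let := tensorTensorModule k A B M N
  induction z with
  | zero => rw [smul_zero, map_zero]
  | tmul m n => rw [tensorTensorModule_smul_tmul, one_smul]; rfl
  | add x y hx hy => rw [smul_add, map_add, hx, hy]

lemma tensorTensorModule_one_tmul_smul (b : B) (z : M ⊗[k] N) :
    letI := tensorTensorModule k A B M N
    ((1 : A) ⊗ₜ[k] b) • z = (Module.toModuleEnd k N b).lTensor M z := by
  let := tensorTensorModule k A B M N
  induction z with
  | zero => rw [smul_zero, map_zero]
  | tmul m n => rw [tensorTensorModule_smul_tmul, one_smul]; rfl
  | add x y hx hy => rw [smul_add, map_add, hx, hy]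

end TensorTensorModule

/-- Let `k` be a field, `R'` and `S'` `k`-algebras, `I ⊆ R'` and
`J ⊆ S'` ideals, `E'` an `R'`-module and `F'` an `S'`-module. Inside the
`R' ⊗ₖ S'`-module `E' ⊗ₖ F'`, the submodule of elements annihilated by the ideal
`I ⊗ S' + R' ⊗ J` is exactly `E ⊗ₖ F`, where `E = {e ∈ E' : I·e = 0}` and
`F = {f ∈ F' : J·f = 0}`. -/
theorem annihilated_submodule_of_tensor_eq_tensor_of_annihilated
    (k R' S' : Type) [Field k] [CommRing R'] [CommRing S'] [Algebra k R'] [Algebra k S']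
    (I : Ideal R') (J : Ideal S')
    (E' F' : Type) [AddCommGroup E'] [Module k E'] [Module R' E'] [IsScalarTower k R' E']
    [AddCommGroup F'] [Module k F'] [Module S' F'] [IsScalarTower k S' F']
    (E : Submodule R' E') (hE : E = {e : E' | ∀ a ∈ I, a • e = 0})
    (F : Submodule S' F') (hF : F = {x : F' | ∀ b ∈ J, b • x = 0}) :
    letI : Module (R' ⊗[k] S') (E' ⊗[k] F') := tensorTensorModule k R' S' E' F'
    ∀ z : E' ⊗[k] F',
      (∀ r ∈ Ideal.map (Algebra.TensorProduct.includeLeft : R' →ₐ[k] R' ⊗[k] S') I ⊔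
          Ideal.map (Algebra.TensorProduct.includeRight : S' →ₐ[k] R' ⊗[k] S') J,
        r • z = 0) ↔
      z ∈ LinearMap.range
        (TensorProduct.map (E.subtype.restrictScalars k) (F.subtype.restrictScalars k)) := by
  intro z
  let := tensorTensorModule k R' S' E' F'
  change _ ↔ z ∈ range (TensorProduct.map (E.restrictScalars k).subtype
    (F.restrictScalars k).subtype)
  rw [forall_mem_map_sup_map_smul_eq_zero_iff,
    range_map_subtype_eq_range_rTensor_inf_range_lTensor,
    restrictScalars_eq_iInf_ker_toModuleEnd k E I hE,
    restrictScalars_eq_iInf_ker_toModuleEnd k F J hF,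
    range_rTensor_subtype_iInf_ker, range_lTensor_subtype_iInf_ker]
  simp [tensorTensorModule_tmul_one_smul, tensorTensorModule_one_tmul_smul]
end

section
/- Let k be a field, R_1 a finitely generated k-algebra, and m ⊂ R_1 a maximal ideal with R_1/m ≅ k. If E is an injective envelope of k = R_1/m as a module over the localization (R_1)_m, then E, regarded as an R_1-module, is also an injective envelope of k over the ring R_1. -/
open IsLocalRing TensorProduct

universe u v w

section

variable {R : Type u} {S : Type v} {E : Type w} [CommRing R] [CommRing S] [Algebra R S]
  [AddCommGroup E] [Module R E] [Module S E] [IsScalarTower R S E]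

theorem Module.Injective.of_flat_of_isScalarTower [Module.Flat R S] [Small.{w} S]
    [Module.Injective S E] : Module.Injective R E := by
  refine ⟨fun X Y _ _ _ _ f hf g => ?_⟩
  have hfS : Function.Injective (f.baseChange S) := by
    rw [LinearMap.baseChange_eq_ltensor]
    exact Module.Flat.lTensor_preserves_injective_linearMap f hf
  obtain ⟨g', hg'⟩ := Module.Injective.extension_property S E _ _ _ hfS (g.liftBaseChange S)
  refine ⟨g'.restrictScalars R ∘ₗ TensorProduct.mk R S Y 1, fun x => ?_⟩
  simpa using LinearMap.congr_fun hg' (1 ⊗ₜ x)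

theorem Submodule.restrictScalars_inf_ne_bot_of_isLocalization (M : Submonoid R)
    [IsLocalization M S] {N : Submodule S E}
    (hN : ∀ P : Submodule S E, P ≠ ⊥ → N ⊓ P ≠ ⊥)
    {P : Submodule R E} (hP : P ≠ ⊥) : N.restrictScalars R ⊓ P ≠ ⊥ := by
  have hspan : span S (P : Set E) ≠ ⊥ := fun h =>
    hP ((Submodule.eq_bot_iff P).mpr (span_eq_bot.mp h))
  obtain ⟨x, ⟨hxN, hxP⟩, hx0⟩ := exists_mem_ne_zero_of_ne_bot (hN _ hspan)
  obtain ⟨t, ht⟩ := multiple_mem_span_of_mem_localization_span M S _ x hxP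
  rw [span_eq] at ht
  have htx : (t : R) • x = algebraMap R S t • x := (algebraMap_smul S (t : R) x).symm
  refine (Submodule.ne_bot_iff _).mpr ⟨(t : R) • x, ⟨?_, ht⟩, ?_⟩
  · exact htx ▸ N.smul_mem _ hxN
  · rwa [htx, Ne, (IsLocalization.map_units S t).smul_eq_zero]

end

section

variable {R S E : Type*} [CommRing R] [CommRing S] [Algebra R S]
  (m : Ideal R) [m.IsMaximal] [IsLocalization.AtPrime S m] [IsLocalRing S]

noncomputable def IsLocalization.AtPrime.quotMaximalIdealLinearEquiv :
    (R ⧸ m) ≃ₗ[R] S ⧸ maximalIdeal S :=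
  (AlgEquiv.ofRingEquiv (f := equivQuotMaximalIdeal m S) fun _ => rfl).toLinearEquiv

theorem IsLocalization.AtPrime.eq_restrictScalars_comp_quotMaximalIdealLinearEquiv
    [AddCommGroup E] [Module R E] [Module S E] [IsScalarTower R S E]
    {h : (R ⧸ m) →ₗ[R] E} {ι : (S ⧸ maximalIdeal S) →ₗ[S] E}
    (h1 : h (Ideal.Quotient.mk m 1) = ι (Ideal.Quotient.mk _ 1)) :
    h = ι.restrictScalars R ∘ₗ (quotMaximalIdealLinearEquiv (S := S) m).toLinearMap :=
  Submodule.linearMap_qext _ <| LinearMap.ext_ring <| by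
    simpa [quotMaximalIdealLinearEquiv] using h1

end

theorem injective_envelope_over_localization_is_injective_envelope_general
    (R₁ : Type) [CommRing R₁]
    (m : Ideal R₁) [m.IsMaximal]
    (E : Type) [AddCommGroup E] [Module (Localization.AtPrime m) E]
    (ι : (Localization.AtPrime m ⧸ IsLocalRing.maximalIdeal (Localization.AtPrime m))
      →ₗ[Localization.AtPrime m] E)
    (hι : IsInjectiveEnvelope (Localization.AtPrime m) ι) :
    -- `E` regarded as an `R₁`-module:
    letI : Module R₁ E := Module.compHom E (algebraMap R₁ (Localization.AtPrime m))
    -- any `R₁`-linear map from `k = R₁/𝔪` to `E` sending `1` to `ι(1)` is an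
    -- injective envelope of `k` over `R₁`:
    ∀ (h : (R₁ ⧸ m) →ₗ[R₁] E),
      h (Ideal.Quotient.mk m 1) = ι (Submodule.Quotient.mk 1) →
      IsInjectiveEnvelope R₁ h := by
  let : Module R₁ E := Module.compHom E (algebraMap R₁ (Localization.AtPrime m))
  have : IsScalarTower R₁ (Localization.AtPrime m) E := IsScalarTower.of_compHom _ _ _
  intro h h1
  obtain ⟨hE, hιinj, hιess⟩ := hι
  have hfactor := IsLocalization.AtPrime.eq_restrictScalars_comp_quotMaximalIdealLinearEquiv m h1
  refine ⟨.of_flat_of_isScalarTower (S := Localization.AtPrime m), ?_, fun P hP => ?_⟩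
  · rw [hfactor]
    exact hιinj.comp (LinearEquiv.injective _)
  · rw [hfactor, LinearMap.range_comp_of_range_eq_top _ (LinearEquiv.range _)]
    exact Submodule.restrictScalars_inf_ne_bot_of_isLocalization m.primeCompl hιess hP

/-- Let `k` be a field, `R₁` a finitely generated `k`-algebra and
`𝔪 ⊂ R₁` a maximal ideal with `R₁/𝔪 ≅ k`. If `E` is an injective envelope of
`k = R₁/𝔪` over the localization `(R₁)_𝔪`, then `E`, regarded as an `R₁`-module, is
also an injective envelope of `k` over `R₁`. -/
theorem injective_envelope_over_localization_is_injective_envelope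
    (k R₁ : Type) [Field k] [CommRing R₁] [Algebra k R₁] [Algebra.FiniteType k R₁]
    (m : Ideal R₁) [m.IsMaximal] (hres : Function.Bijective (algebraMap k (R₁ ⧸ m)))
    (E : Type) [AddCommGroup E] [Module (Localization.AtPrime m) E]
    (ι : (Localization.AtPrime m ⧸ IsLocalRing.maximalIdeal (Localization.AtPrime m))
      →ₗ[Localization.AtPrime m] E)
    (hι : IsInjectiveEnvelope (Localization.AtPrime m) ι) :
    -- `E` regarded as an `R₁`-module:
    letI : Module R₁ E := Module.compHom E (algebraMap R₁ (Localization.AtPrime m))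
    -- any `R₁`-linear map from `k = R₁/𝔪` to `E` sending `1` to `ι(1)` is an
    -- injective envelope of `k` over `R₁`:
    ∀ (h : (R₁ ⧸ m) →ₗ[R₁] E),
      h (Ideal.Quotient.mk m 1) = ι (Submodule.Quotient.mk 1) →
      IsInjectiveEnvelope R₁ h :=
  injective_envelope_over_localization_is_injective_envelope_general R₁ m E ι hι
end

section
/- Let 𝒜 be an abelian category with arbitrary products and enough injectives, and let (J_α^*)_{α} be a family of bounded-below cochain complexes of injective objects of 𝒜. Then the degreewise product complex ∏_α J_α^*, formed in 𝒜, is a product of the objects J_α^* in the derived category D(𝒜). In particular, if each J_α^* is an injective resolution of an object x_α, then the product ∏_α x_α in D(𝒜) is computed by the ordinary product complex ∏_α J_α^*, and H^n(∏_α x_α) = H^n(∏_α J_α^*) for all n. -/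
/-!
A bounded below complex of injectives is K-injective: every morphism into it from an acyclic
complex is null-homotopic. Homotopies into a degreewise product can be assembled from
homotopies into the factors, so the degreewise product `∏ J_α` is a product in the homotopy
category and is again K-injective. For a K-injective target `L`, the localization functor
`Qh : K(𝒜) ⥤ D(𝒜)` is bijective on morphisms `K ⟶ L`; since `Qh` is moreover essentially
surjective, it carries the product fan of the `J_α` to a product fan in `D(𝒜)`.
Finally `Q` inverts the quasi-isomorphisms `x_α ⟶ J_α`, so any product of the `x_α` in `D(𝒜)`
is isomorphic to `Q (∏ J_α)`.
-/

open CategoryTheory Limits DerivedCategory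

universe v u

noncomputable def CategoryTheory.Functor.isLimitFanMkObjOfEssSurj {C D : Type*} [Category C]
    [Category D] (F : C ⥤ D) [F.EssSurj] {β : Type*} {Y : β → C} {c : Fan Y} (hc : IsLimit c)
    (hsurj : ∀ X i, Function.Surjective (F.map : (X ⟶ Y i) → (F.obj X ⟶ F.obj (Y i))))
    (hext : ∀ X (φ φ' : F.obj X ⟶ F.obj c.pt),
      (∀ i, φ ≫ F.map (c.proj i) = φ' ≫ F.map (c.proj i)) → φ = φ') :
    IsLimit (Fan.mk (F.obj c.pt) fun i => F.map (c.proj i)) :=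
  let lift (s : Fan fun i => F.obj (Y i)) : F.obj (F.objPreimage s.pt) ⟶ F.obj c.pt :=
    F.map (Fan.IsLimit.lift hc fun i =>
      Function.surjInv (hsurj _ i) ((F.objObjPreimageIso s.pt).hom ≫ s.proj i))
  have lift_comp (s : Fan fun i => F.obj (Y i)) (i : β) :
      lift s ≫ F.map (c.proj i) = (F.objObjPreimageIso s.pt).hom ≫ s.proj i := by
    rw [← F.map_comp, Fan.IsLimit.fac, Function.surjInv_eq (hsurj _ i)]
  Fan.IsLimit.mk _ (fun s => (F.objObjPreimageIso s.pt).inv ≫ lift s)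
    (fun s i => by rw [fan_mk_proj, Category.assoc, lift_comp, Iso.inv_hom_id_assoc])
    (fun s m hm => by
      rw [Iso.eq_inv_comp]
      refine hext _ _ _ fun i => ?_
      rw [lift_comp, Category.assoc, ← hm i, fan_mk_proj])

section Products

variable {C : Type*} [Category C] [Preadditive C] {ι : Type*} {c : ComplexShape ι}
  {α : Type*} [HasLimitsOfShape (Discrete α) C] (J : α → HomologicalComplex C c)

noncomputable def HomologicalComplex.isLimitFanMkXPi (n : ι) :
    IsLimit (Fan.mk ((∏ᶜ J).X n) fun i => (Pi.π J i).f n) :=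
  isLimitFanMkObjOfIsLimit (eval C c n) _ _ (productIsProduct J)

variable {J} in
open HomologicalComplex in
noncomputable def Homotopy.pi {K : HomologicalComplex C c} {f g : K ⟶ ∏ᶜ J}
    (h : ∀ i, Homotopy (f ≫ Pi.π J i) (g ≫ Pi.π J i)) : Homotopy f g where
  hom p q := Fan.IsLimit.lift (isLimitFanMkXPi J q) fun i => (h i).hom p q
  zero p q hpq := Fan.IsLimit.hom_ext (isLimitFanMkXPi J q) _ _ fun i => by
    rw [zero_comp]
    exact (Fan.IsLimit.fac _ _ i).trans ((h i).zero p q hpq)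
  comm n := Fan.IsLimit.hom_ext (isLimitFanMkXPi J n) _ _ fun i => by
    have hom_comp (p q : ι) : Fan.IsLimit.lift (isLimitFanMkXPi J q)
        (fun i => (h i).hom p q) ≫ (Pi.π J i).f q = (h i).hom p q :=
      Fan.IsLimit.fac _ _ i
    change _ ≫ (Pi.π J i).f n = _ ≫ (Pi.π J i).f n
    rw [Preadditive.add_comp, Preadditive.add_comp, ← dNext_comp_right, ← prevD_comp_right]
    simp only [hom_comp, ← comp_f]
    exact (h i).comm n

noncomputable def HomotopyCategory.isLimitFanMkQuotientObjPi :
    IsLimit (Fan.mk ((quotient C c).obj (∏ᶜ J)) fun i => (quotient C c).map (Pi.π J i)) :=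
  (quotient C c).isLimitFanMkObjOfEssSurj (productIsProduct J)
    (fun _ _ => (quotient C c).map_surjective) fun _ φ φ' h => by
      obtain ⟨a, rfl⟩ := (quotient C c).map_surjective φ
      obtain ⟨a', rfl⟩ := (quotient C c).map_surjective φ'
      exact eq_of_homotopy _ _ (Homotopy.pi fun i =>
        homotopyOfEq _ _ (by rw [Functor.map_comp, Functor.map_comp]; exact h i))

end Products

namespace CochainComplex

variable {C : Type*} [Category C] [Abelian C]

lemma isKInjective_of_injective_of_isZero (L : CochainComplex C ℤ)
    (hinj : ∀ n, Injective (L.X n)) (hbdd : ∃ N, ∀ n, n < N → IsZero (L.X n)) :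
    L.IsKInjective := by
  obtain ⟨N, hN⟩ := hbdd
  have : L.IsStrictlyGE N := (L.isStrictlyGE_iff N).2 hN
  exact isKInjective_of_injective L N

instance isKInjective_pi {α : Type*} [HasLimitsOfShape (Discrete α) C]
    (J : α → CochainComplex C ℤ) [∀ i, (J i).IsKInjective] : (∏ᶜ J).IsKInjective where
  nonempty_homotopy_zero f hK := ⟨Homotopy.pi fun i =>
    (IsKInjective.homotopyZero (f ≫ Pi.π J i) hK).trans (.ofEq (by simp))⟩

end CochainComplex

namespace DerivedCategory

variable {C : Type*} [Category C] [Abelian C] [HasDerivedCategory C] {α : Type*}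
  [HasLimitsOfShape (Discrete α) C] (J : α → CochainComplex C ℤ) [∀ i, (J i).IsKInjective]

open CochainComplex.IsKInjective in
noncomputable def isLimitFanMkQhObjPi :
    IsLimit (Fan.mk (Qh.obj ((HomotopyCategory.quotient C _).obj (∏ᶜ J)))
      fun i => Qh.map ((HomotopyCategory.quotient C _).map (Pi.π J i))) :=
  Qh.isLimitFanMkObjOfEssSurj (HomotopyCategory.isLimitFanMkQuotientObjPi J)
    (fun X i => (Qh_map_bijective X (J i)).2) fun X φ φ' h => by
      obtain ⟨a, rfl⟩ := (Qh_map_bijective X (∏ᶜ J)).2 φ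
      obtain ⟨a', rfl⟩ := (Qh_map_bijective X (∏ᶜ J)).2 φ'
      congr 1
      exact Fan.IsLimit.hom_ext (HomotopyCategory.isLimitFanMkQuotientObjPi J) _ _ fun i =>
        (Qh_map_bijective X (J i)).1 (by simpa only [Functor.map_comp] using h i)

noncomputable def isLimitFanMkQObjPi :
    IsLimit (Fan.mk (Q.obj (∏ᶜ J)) fun i => Q.map (Pi.π J i)) :=
  isLimitMapConeFanMkEquiv Q J (Pi.π J) (IsLimit.mapConeEquiv (quotientCompQhIso C)
    ((isLimitMapConeFanMkEquiv (HomotopyCategory.quotient C _ ⋙ Qh) J (Pi.π J)).symm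
      (isLimitFanMkQhObjPi J)))

end DerivedCategory

theorem product_of_injective_resolutions_computes_derived_product_general
    (A : Type u) [Category.{v} A] [Abelian A] [HasProducts A]
    [HasDerivedCategory A]
    (α : Type v) (J : α → CochainComplex A ℤ)
    (hinj : ∀ (i : α) (n : ℤ), Injective ((J i).X n))
    (hbdd : ∀ i : α, ∃ N : ℤ, ∀ n : ℤ, n < N → IsZero ((J i).X n)) :
    -- the degreewise product complex is a product in the derived category:
    Nonempty (IsLimit (Fan.mk ((DerivedCategory.Q (C := A)).obj (∏ᶜ J))
      (fun i => (DerivedCategory.Q (C := A)).map (Pi.π J i)))) ∧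
    -- if moreover each `J_α` is an injective resolution of an object `x_α`, then any
    -- product `∏_α x_α` in `D(𝒜)` has the cohomology of the product complex `∏_α J_α`:
    (∀ (x : α → A)
      (f : ∀ i : α, (HomologicalComplex.single A (ComplexShape.up ℤ) 0).obj (x i) ⟶ J i),
      (∀ i, QuasiIso (f i)) →
      ∀ (P : DerivedCategory A)
        (π : ∀ i : α, P ⟶ (DerivedCategory.Q (C := A)).obj
          ((HomologicalComplex.single A (ComplexShape.up ℤ) 0).obj (x i))),
        Nonempty (IsLimit (Fan.mk P π)) →
      ∀ n : ℤ, Nonempty ((DerivedCategory.homologyFunctor A n).obj P ≅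
        (HomologicalComplex.homologyFunctor A (ComplexShape.up ℤ) n).obj (∏ᶜ J))) := by
  have (i : α) : (J i).IsKInjective :=
    CochainComplex.isKInjective_of_injective_of_isZero _ (hinj i) (hbdd i)
  refine ⟨⟨isLimitFanMkQObjPi J⟩, fun x f hf P π ⟨hP⟩ n => ⟨?_⟩⟩
  let e : P ≅ Q.obj (∏ᶜ J) := hP.conePointsIsoOfNatIso (isLimitFanMkQObjPi J)
    (Discrete.natIso fun i => asIso (Q.map (f i.as)))
  exact (homologyFunctor A n).mapIso e ≪≫ (homologyFunctorFactors A n).app (∏ᶜ J)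

/-- Let `𝒜` be an abelian category with arbitrary products and
enough injectives, and `(J_α)` a family of bounded-below cochain complexes of
injective objects. Then the degreewise product complex `∏_α J_α` is a product of
the `J_α` in the derived category `D(𝒜)`; in particular, if each `J_α` is an
injective resolution of an object `x_α`, then the product `∏_α x_α` in `D(𝒜)` is
computed by the ordinary product complex, and `H^n (∏_α x_α) = H^n (∏_α J_α)` for
all `n`. -/
theorem product_of_injective_resolutions_computes_derived_product
    (A : Type u) [Category.{v} A] [Abelian A] [HasProducts A] [EnoughInjectives A]
    [HasDerivedCategory A]
    (α : Type v) (J : α → CochainComplex A ℤ)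
    (hinj : ∀ (i : α) (n : ℤ), Injective ((J i).X n))
    (hbdd : ∀ i : α, ∃ N : ℤ, ∀ n : ℤ, n < N → IsZero ((J i).X n)) :
    -- the degreewise product complex is a product in the derived category:
    Nonempty (IsLimit (Fan.mk ((DerivedCategory.Q (C := A)).obj (∏ᶜ J))
      (fun i => (DerivedCategory.Q (C := A)).map (Pi.π J i)))) ∧
    -- if moreover each `J_α` is an injective resolution of an object `x_α`, then any
    -- product `∏_α x_α` in `D(𝒜)` has the cohomology of the product complex `∏_α J_α`:
    (∀ (x : α → A)
      (f : ∀ i : α, (HomologicalComplex.single A (ComplexShape.up ℤ) 0).obj (x i) ⟶ J i),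
      (∀ i, QuasiIso (f i)) →
      ∀ (P : DerivedCategory A)
        (π : ∀ i : α, P ⟶ (DerivedCategory.Q (C := A)).obj
          ((HomologicalComplex.single A (ComplexShape.up ℤ) 0).obj (x i))),
        Nonempty (IsLimit (Fan.mk P π)) →
      ∀ n : ℤ, Nonempty ((DerivedCategory.homologyFunctor A n).obj P ≅
        (HomologicalComplex.homologyFunctor A (ComplexShape.up ℤ) n).obj (∏ᶜ J))) :=
  product_of_injective_resolutions_computes_derived_product_general A α J hinj hbdd
end

section
/- Let 𝒜 be an abelian category satisfying AB4 and admitting countable products, let A be an object of 𝒜, and set x = ∐_{i=0}^∞ A[i] in D(𝒜). The truncations x^{≥ -n} ≅ ∏_{i=0}^n A[i] form an inverse system whose transition maps are the (degreewise split surjective) projections, and the homotopy inverse limit holim_n x^{≥ -n} — defined by the triangle holim_n x^{≥ -n} → ∏_n x^{≥ -n} → ∏_n x^{≥ -n}, where the second map is 1 minus the shift — is isomorphic to the product ∏_{i=0}^∞ A[i] in D(𝒜). -/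
/-!
The projections `∏_{i ≤ n+1} A[i] → ∏_{i ≤ n} A[i]` are split epimorphisms, hence so is
`1 - shift` on `∏ₙ ∏_{i ≤ n} A[i]`. The third map of the defining triangle of the holim
therefore vanishes, so the holim is the kernel of `1 - shift`: maps into it are the
compatible families into the tower, i.e. maps into `∏ᵢ A[i]`.
-/

open CategoryTheory Limits DerivedCategory Pretriangulated

universe v u

namespace CategoryTheory.Pretriangulated

variable {C : Type*} [Category* C] [Preadditive C] [HasZeroObject C] [HasShift C ℤ]
  [∀ n : ℤ, Functor.Additive (shiftFunctor C n)] [Pretriangulated C]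

noncomputable def isLimitKernelForkOfDistTriangleOfEpi (T : Triangle C)
    (hT : T ∈ distTriang C) [Epi T.mor₂] : IsLimit (kernelForkOfDistTriangle T hT) :=
  have : Mono T.mor₁ := T.mono₁ hT (T.mor₃_eq_zero_of_epi₂ hT inferInstance)
  KernelFork.IsLimit.ofι' T.mor₁ (comp_distTriang_mor_zero₁₂ T hT) fun k hk =>
    ⟨(T.coyoneda_exact₂ hT k hk).choose, (T.coyoneda_exact₂ hT k hk).choose_spec.symm⟩

end CategoryTheory.Pretriangulated

section OneSubShift

variable {C : Type*} [Category* C] [Preadditive C] {y : ℕ → C} {p : ∀ n, y (n + 1) ⟶ y n}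
  {P : C} {ρ : ∀ n, P ⟶ y n} {σ : P ⟶ P}

lemma comp_oneSubShift_eq_zero_iff (hP : IsLimit (Fan.mk P ρ))
    (hσ : ∀ n, σ ≫ ρ n = ρ n - ρ (n + 1) ≫ p n) {W : C} (u : W ⟶ P) :
    u ≫ σ = 0 ↔ ∀ n, u ≫ ρ (n + 1) ≫ p n = u ≫ ρ n := by
  refine ⟨fun hu n => ?_, fun hu => Fan.IsLimit.hom_ext hP _ _ fun n => ?_⟩
  · have := congrArg (· ≫ ρ n) hu
    simp only [Category.assoc, hσ, Preadditive.comp_sub, Limits.zero_comp, sub_eq_zero] at this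
    exact this.symm
  · simp [hσ, hu]

lemma isSplitEpi_oneSubShift [∀ n, IsSplitEpi (p n)] (hP : IsLimit (Fan.mk P ρ))
    (hσ : ∀ n, σ ≫ ρ n = ρ n - ρ (n + 1) ≫ p n) : IsSplitEpi σ := by
  -- `s₀ = 0` and `sₙ₊₁ = (sₙ - ρₙ) ≫ tₙ` with `tₙ` a section of `pₙ`, so `sₙ - sₙ₊₁ ≫ pₙ = ρₙ`.
  let s : ∀ n, P ⟶ y n := fun n => Nat.rec 0 (fun n sn => (sn - ρ n) ≫ section_ (p n)) n
  have hs : ∀ n, Fan.IsLimit.lift hP s ≫ ρ n = s n := Fan.IsLimit.fac hP s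
  refine ⟨⟨Fan.IsLimit.lift hP s, Fan.IsLimit.hom_ext hP _ _ fun n => ?_⟩⟩
  change (_ ≫ σ) ≫ ρ n = 𝟙 P ≫ ρ n
  rw [Category.id_comp, Category.assoc, hσ, Preadditive.comp_sub, hs, ← Category.assoc, hs]
  change s n - ((s n - ρ n) ≫ section_ (p n)) ≫ p n = ρ n
  simp

end OneSubShift

section PartialProducts

variable {C : Type*} [Category* C] [HasFiniteProducts C] (X : ℕ → C)

noncomputable def partialProdProj (n : ℕ) :
    (∏ᶜ fun i : Fin (n + 2) => X i) ⟶ ∏ᶜ fun i : Fin (n + 1) => X i :=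
  Pi.lift fun i => Pi.π (fun i : Fin (n + 2) => X i) i.castSucc

@[simp]
lemma partialProdProj_π (n : ℕ) (i : Fin (n + 1)) :
    partialProdProj X n ≫ Pi.π _ i = Pi.π (fun i : Fin (n + 2) => X i) i.castSucc :=
  Pi.lift_π _ _

instance [HasZeroMorphisms C] (n : ℕ) : IsSplitEpi (partialProdProj X n) :=
  ⟨⟨Pi.lift (Fin.lastCases
      (motive := fun i : Fin (n + 2) => (∏ᶜ fun i : Fin (n + 1) => X i) ⟶ X i) 0
      fun i => Pi.π _ i), by ext i; simp⟩⟩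

variable {X}

lemma comp_π_eq_comp_π_last {W : C} {v : ∀ n, W ⟶ ∏ᶜ fun i : Fin (n + 1) => X i}
    (hv : ∀ n, v (n + 1) ≫ partialProdProj X n = v n) (n : ℕ) (i : Fin (n + 1)) :
    v n ≫ Pi.π _ i = v i ≫ Pi.π (fun j : Fin (i + 1) => X j) (Fin.last i) := by
  obtain ⟨i, hi⟩ := i
  induction n, Nat.le_of_lt_succ hi using Nat.le_induction with
  | base => rfl
  | succ n hin ih =>
    rw [← ih (Nat.lt_succ_of_le hin), ← hv n, Category.assoc, partialProdProj_π]
    rfl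

variable [Preadditive C] {q : C} {π : ∀ i, q ⟶ X i}
  {P : C} {ρ : ∀ n, P ⟶ ∏ᶜ fun i : Fin (n + 1) => X i} {σ : P ⟶ P} {f : q ⟶ P}

lemma partialProdLift_comp_oneSubShift (hP : IsLimit (Fan.mk P ρ))
    (hσ : ∀ n, σ ≫ ρ n = ρ n - ρ (n + 1) ≫ partialProdProj X n)
    (hf : ∀ n, f ≫ ρ n = Pi.lift fun i : Fin (n + 1) => π i) : f ≫ σ = 0 :=
  (comp_oneSubShift_eq_zero_iff hP hσ f).2 fun n => by
    rw [← Category.assoc, hf, hf]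
    ext i
    simp

noncomputable def isLimitKernelForkPartialProdLift (hq : IsLimit (Fan.mk q π))
    (hP : IsLimit (Fan.mk P ρ)) (hσ : ∀ n, σ ≫ ρ n = ρ n - ρ (n + 1) ≫ partialProdProj X n)
    (hf : ∀ n, f ≫ ρ n = Pi.lift fun i : Fin (n + 1) => π i) :
    IsLimit (KernelFork.ofι f (partialProdLift_comp_oneSubShift hP hσ hf)) :=
  KernelFork.IsLimit.ofι _ _
    (fun u _ => Fan.IsLimit.lift hq fun i => u ≫ ρ i ≫ Pi.π _ (Fin.last i))
    (fun u hu => Fan.IsLimit.hom_ext hP _ _ fun n => by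
      have hv := (comp_oneSubShift_eq_zero_iff hP hσ u).1 hu
      change (_ ≫ f) ≫ ρ n = u ≫ ρ n
      rw [Category.assoc, hf]
      ext i
      have hdiag := comp_π_eq_comp_π_last (v := fun n => u ≫ ρ n)
        (fun n => by simpa only [Category.assoc] using hv n) n i
      simp only [Category.assoc, Pi.lift_π] at hdiag ⊢
      rw [hdiag]
      exact Fan.IsLimit.fac hq _ _)
    (fun u _ m hm => Fan.IsLimit.hom_ext hq _ _ fun i => by
      refine Eq.trans ?_ (Fan.IsLimit.fac hq _ i).symm
      rw [← hm, Category.assoc, reassoc_of% (hf i)]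
      simp)

end PartialProducts

theorem holim_of_truncations_iso_product_general
    (A : Type u) [Category.{v} A] [Abelian A]
    [HasDerivedCategory A] (a : A)
    -- the inverse system of truncations `x^{≥ -n} = ∏_{i=0}^n A[i]`, with the
    -- projections as transition maps:
    (y : ℕ → DerivedCategory A)
    (hy : ∀ n : ℕ, y n = ∏ᶜ (fun i : Fin (n + 1) => (singleFunctor A (-(i : ℤ))).obj a))
    (pmap : ∀ n : ℕ, y (n + 1) ⟶ y n)
    (hpmap : ∀ n : ℕ, pmap n = eqToHom (hy (n + 1)) ≫
      Pi.lift (fun i : Fin (n + 1) =>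
        Pi.π (fun i : Fin (n + 2) => (singleFunctor A (-(i : ℤ))).obj a) i.castSucc) ≫
      eqToHom (hy n).symm)
    -- a product `∏ₙ x^{≥ -n}` in `D(𝒜)`:
    (Ppt : DerivedCategory A) (ρ : ∀ n : ℕ, Ppt ⟶ y n)
    (hP : Nonempty (IsLimit (Fan.mk Ppt ρ)))
    -- the map `1 - shift` on `∏ₙ x^{≥ -n}`:
    (σ : Ppt ⟶ Ppt) (hσ : ∀ n : ℕ, σ ≫ ρ n = ρ n - ρ (n + 1) ≫ pmap n)
    -- a homotopy inverse limit `H = holimₙ x^{≥ -n}`: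
    (H : DerivedCategory A) (e : H ⟶ Ppt) (δ : Ppt ⟶ H⟦(1 : ℤ)⟧)
    (hH : (Triangle.mk e σ δ) ∈ distTriang (DerivedCategory A))
    -- a product `∏_{i=0}^∞ A[i]` in `D(𝒜)`:
    (q : DerivedCategory A) (π : ∀ i : ℕ, q ⟶ (singleFunctor A (-(i : ℤ))).obj a)
    (hq : Nonempty (IsLimit (Fan.mk q π))) :
    Nonempty (H ≅ q) := by
  obtain ⟨hP⟩ := hP
  obtain ⟨hq⟩ := hq
  let X : ℕ → DerivedCategory A := fun i => (singleFunctor A (-(i : ℤ))).obj a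
  obtain rfl : y = fun n => ∏ᶜ fun i : Fin (n + 1) => X i := funext hy
  obtain rfl : pmap = partialProdProj X :=
    funext fun n => by simpa [partialProdProj] using hpmap n
  have : IsSplitEpi (Triangle.mk e σ δ).mor₂ := isSplitEpi_oneSubShift hP hσ
  exact ⟨IsLimit.conePointUniqueUpToIso (isLimitKernelForkOfDistTriangleOfEpi _ hH)
    (isLimitKernelForkPartialProdLift hq hP hσ (Fan.IsLimit.fac hP _))⟩

/-- Let `𝒜` be an abelian category satisfying AB4 and admitting
countable products, `A ∈ 𝒜`, and `x = ∐_{i=0}^∞ A[i]` in `D(𝒜)`. The truncations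
`x^{≥ -n} ≅ ∏_{i=0}^n A[i]` form an inverse system whose transition maps are the
projections, and the homotopy inverse limit `holimₙ x^{≥ -n}` — defined by the
triangle `holim → ∏ₙ x^{≥ -n} → ∏ₙ x^{≥ -n} → holim[1]` whose second map is `1`
minus the shift — is isomorphic to the product `∏_{i=0}^∞ A[i]` in `D(𝒜)`. -/
theorem holim_of_truncations_iso_product
    (A : Type u) [Category.{v} A] [Abelian A] [HasCoproducts A] [AB4 A] [HasProducts A]
    [HasDerivedCategory A] (a : A)
    (x : DerivedCategory A)
    (ι : ∀ i : ℕ, (singleFunctor A (-(i : ℤ))).obj a ⟶ x)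
    (hx : Nonempty (IsColimit (Cofan.mk x ι)))
    -- the inverse system of truncations `x^{≥ -n} = ∏_{i=0}^n A[i]`, with the
    -- projections as transition maps:
    (y : ℕ → DerivedCategory A)
    (hy : ∀ n : ℕ, y n = ∏ᶜ (fun i : Fin (n + 1) => (singleFunctor A (-(i : ℤ))).obj a))
    (pmap : ∀ n : ℕ, y (n + 1) ⟶ y n)
    (hpmap : ∀ n : ℕ, pmap n = eqToHom (hy (n + 1)) ≫
      Pi.lift (fun i : Fin (n + 1) =>
        Pi.π (fun i : Fin (n + 2) => (singleFunctor A (-(i : ℤ))).obj a) i.castSucc) ≫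
      eqToHom (hy n).symm)
    -- a product `∏ₙ x^{≥ -n}` in `D(𝒜)`:
    (Ppt : DerivedCategory A) (ρ : ∀ n : ℕ, Ppt ⟶ y n)
    (hP : Nonempty (IsLimit (Fan.mk Ppt ρ)))
    -- the map `1 - shift` on `∏ₙ x^{≥ -n}`:
    (σ : Ppt ⟶ Ppt) (hσ : ∀ n : ℕ, σ ≫ ρ n = ρ n - ρ (n + 1) ≫ pmap n)
    -- a homotopy inverse limit `H = holimₙ x^{≥ -n}`:
    (H : DerivedCategory A) (e : H ⟶ Ppt) (δ : Ppt ⟶ H⟦(1 : ℤ)⟧)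
    (hH : (Triangle.mk e σ δ) ∈ distTriang (DerivedCategory A))
    -- a product `∏_{i=0}^∞ A[i]` in `D(𝒜)`:
    (q : DerivedCategory A) (π : ∀ i : ℕ, q ⟶ (singleFunctor A (-(i : ℤ))).obj a)
    (hq : Nonempty (IsLimit (Fan.mk q π))) :
    Nonempty (H ≅ q) :=
  holim_of_truncations_iso_product_general A a y hy pmap hpmap Ppt ρ hP σ hσ H e δ hH q π hq
end
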